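/- Write ℳ⁺ := ℳ = 1⊗1 + Kθ̄⊗θ + θK⊗θ̄ − ρ⊗ρ and ℳ⁻ := ℳ⁻¹ = 1⊗1 − Kθ̄⊗θ − θK⊗θ̄ − ρ⊗ρ, with expansions ℳ^± = Σ_j m_j^±⊗n_j^±, and define the linear maps s^±: 𝒩 → 𝒩 by s^±(x) := Σ_j μ₀(S(x)·m_j^±)·n_j^±. Then s^±(θ) = ∓θ, s^±(θ̄) = ∓θ̄, s^±(ρ) = 1, s^±(1) = −ρ, and s^±(K·x) = 0 for every x ∈ Λ*E. -/

import Mathlib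

noncomputable section

open TensorProduct

/-- The quadratic form `q(x₀,x₁,x₂) = x₀²` on `ℝ³`. -/
def Nform : QuadraticForm ℝ (Fin 3 → ℝ) :=
  QuadraticMap.weightedSumSquares ℝ (fun i : Fin 3 => if i = 0 then (1 : ℝ) else 0)

/-- The algebra `𝒩 = ℤ/2 ⋉ Λ*ℝ²`, realized as the Clifford algebra of `Nform`. -/
abbrev NA := CliffordAlgebra Nform

/-- The generator `K`. -/
def K : NA := CliffordAlgebra.ι Nform (Pi.single 0 1)

/-- The generator `θ`. -/
def θ : NA := CliffordAlgebra.ι Nform (Pi.single 1 1)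

/-- The generator `θ̄`. -/
def θb : NA := CliffordAlgebra.ι Nform (Pi.single 2 1)

/-- `ρ := θ̄θ`. -/
def ρ : NA := θb * θ

/-- `ℳ⁺ := ℳ = 1⊗1 + Kθ̄⊗θ + θK⊗θ̄ − ρ⊗ρ`. -/
def MonoP : NA ⊗[ℝ] NA := 1 + (K * θb) ⊗ₜ[ℝ] θ + (θ * K) ⊗ₜ[ℝ] θb - ρ ⊗ₜ[ℝ] ρ

/-- `ℳ⁻ := ℳ⁻¹ = 1⊗1 − Kθ̄⊗θ − θK⊗θ̄ − ρ⊗ρ`. -/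
def MonoM : NA ⊗[ℝ] NA := 1 - (K * θb) ⊗ₜ[ℝ] θ - (θ * K) ⊗ₜ[ℝ] θb - ρ ⊗ₜ[ℝ] ρ

/-- `Λ*E`, the subalgebra of `𝒩` spanned by `1, θ, θ̄, ρ`. -/
def ΛE : Submodule ℝ NA := Submodule.span ℝ {1, θ, θb, ρ}

/-- Given the functional `μ₀`, the antipode `S` and an element `m = Σ_j m_j ⊗ n_j` of
`𝒩⊗𝒩`, this is the map `x ↦ Σ_j μ₀(S(x)·m_j)·n_j` (expressed basis-freely). -/
def sMap (μ₀ : NA →ₗ[ℝ] ℝ) (S : NA →ₗ[ℝ] NA) (m : NA ⊗[ℝ] NA) (x : NA) : NA :=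
  (TensorProduct.lid ℝ NA)
    (LinearMap.rTensor NA (μ₀ ∘ₗ LinearMap.mulLeft ℝ (S x)) m)

/-!
Expanding `ℳ^±` gives `s^±(x) = μ₀(S x)·1 ± μ₀(S x·Kθ̄)·θ ± μ₀(S x·θK)·θ̄ − μ₀(S x·ρ)·ρ`.
For `x` one of the eight monomials `K^a·g` (`g ∈ {1, θ, θ̄, ρ}`), `S x` is again `±` a monomial,
and the relations of `𝒩` turn each product `S x·m_j` into `±` a monomial, so only the products
equal to `±ρ` survive `μ₀`. On `K·Λ*E` no product is `±ρ`, and linearity of `s^±` extends the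
vanishing from the four generators to all of `Λ*E`.
-/
lemma Nform_apply (v : Fin 3 → ℝ) : Nform v = v 0 * v 0 := by
  simp [Nform, QuadraticMap.weightedSumSquares_apply]

lemma Nform_isOrtho_single {i j : Fin 3} (h : i ≠ j) :
    Nform.IsOrtho (Pi.single i 1) (Pi.single j 1) := by
  rw [QuadraticMap.isOrtho_def, Nform_apply, Nform_apply, Nform_apply]
  fin_cases i <;> fin_cases j <;> simp_all

lemma ι_single_mul_self (i : Fin 3) :
    CliffordAlgebra.ι Nform (Pi.single i 1) * CliffordAlgebra.ι Nform (Pi.single i 1) =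
      if i = 0 then 1 else 0 := by
  rw [CliffordAlgebra.ι_sq_scalar, Nform_apply]
  fin_cases i <;> simp

@[simp] lemma K_mul_K : K * K = 1 := ι_single_mul_self 0
@[simp] lemma θ_mul_θ : θ * θ = 0 := ι_single_mul_self 1
@[simp] lemma θb_mul_θb : θb * θb = 0 := ι_single_mul_self 2

@[simp] lemma θ_mul_K : θ * K = -(K * θ) :=
  CliffordAlgebra.ι_mul_ι_comm_of_isOrtho (Nform_isOrtho_single (by decide))
@[simp] lemma θb_mul_K : θb * K = -(K * θb) :=
  CliffordAlgebra.ι_mul_ι_comm_of_isOrtho (Nform_isOrtho_single (by decide))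
@[simp] lemma θ_mul_θb : θ * θb = -ρ :=
  CliffordAlgebra.ι_mul_ι_comm_of_isOrtho (Nform_isOrtho_single (by decide))
@[simp] lemma θb_mul_θ : θb * θ = ρ := rfl

@[simp] lemma K_mul_K_mul (x : NA) : K * (K * x) = x := by
  rw [← mul_assoc, K_mul_K, one_mul]
@[simp] lemma θ_mul_K_mul (x : NA) : θ * (K * x) = -(K * (θ * x)) := by
  rw [← mul_assoc, θ_mul_K, neg_mul, mul_assoc]
@[simp] lemma θb_mul_K_mul (x : NA) : θb * (K * x) = -(K * (θb * x)) := by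
  rw [← mul_assoc, θb_mul_K, neg_mul, mul_assoc]

@[simp] lemma ρ_mul_K : ρ * K = K * ρ := by
  rw [ρ, mul_assoc, θ_mul_K, mul_neg, θb_mul_K_mul, neg_neg, θb_mul_θ]
@[simp] lemma ρ_mul_K_mul (x : NA) : ρ * (K * x) = K * (ρ * x) := by
  rw [← mul_assoc, ρ_mul_K, mul_assoc]
@[simp] lemma ρ_mul_θ : ρ * θ = 0 := by
  rw [ρ, mul_assoc, θ_mul_θ, mul_zero]
@[simp] lemma θ_mul_ρ : θ * ρ = 0 := by
  rw [ρ, ← mul_assoc, θ_mul_θb, neg_mul, ρ_mul_θ, neg_zero]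
@[simp] lemma θb_mul_ρ : θb * ρ = 0 := by
  rw [ρ, ← mul_assoc, θb_mul_θb, zero_mul]
@[simp] lemma ρ_mul_θb : ρ * θb = 0 := by
  rw [ρ, mul_assoc, θ_mul_θb, mul_neg, θb_mul_ρ, neg_zero]
@[simp] lemma ρ_mul_ρ : ρ * ρ = 0 := by
  nth_rewrite 1 [ρ]
  rw [mul_assoc, θ_mul_ρ, mul_zero]

section sMap

variable (μ₀ : NA →ₗ[ℝ] ℝ) (S : NA →ₗ[ℝ] NA)

lemma sMap_tmul (a b x : NA) : sMap μ₀ S (a ⊗ₜ[ℝ] b) x = μ₀ (S x * a) • b := by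
  simp [sMap]

lemma sMap_add (m n : NA ⊗[ℝ] NA) (x : NA) :
    sMap μ₀ S (m + n) x = sMap μ₀ S m x + sMap μ₀ S n x := by
  simp only [sMap, map_add]

lemma sMap_sub (m n : NA ⊗[ℝ] NA) (x : NA) :
    sMap μ₀ S (m - n) x = sMap μ₀ S m x - sMap μ₀ S n x := by
  simp only [sMap, map_sub]

def sMapₗ (m : NA ⊗[ℝ] NA) : NA →ₗ[ℝ] NA where
  toFun := sMap μ₀ S m
  map_add' x y := by
    have : μ₀ ∘ₗ LinearMap.mulLeft ℝ (S x + S y) =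
        μ₀ ∘ₗ LinearMap.mulLeft ℝ (S x) + μ₀ ∘ₗ LinearMap.mulLeft ℝ (S y) := by
      ext z; simp [add_mul]
    simp only [sMap, map_add, this, LinearMap.rTensor_add, LinearMap.add_apply]
  map_smul' r x := by
    have : μ₀ ∘ₗ LinearMap.mulLeft ℝ (r • S x) = r • μ₀ ∘ₗ LinearMap.mulLeft ℝ (S x) := by
      ext z; simp
    simp only [sMap, map_smul, this, LinearMap.rTensor_smul, LinearMap.smul_apply,
      RingHom.id_apply]

lemma sMap_mul_left_eq_zero_of_mem_span {m : NA ⊗[ℝ] NA} {s : Set NA} {a x : NA}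
    (h : ∀ y ∈ s, sMap μ₀ S m (a * y) = 0) (hx : x ∈ Submodule.span ℝ s) :
    sMap μ₀ S m (a * x) = 0 :=
  (Submodule.span_le (p := LinearMap.ker (sMapₗ μ₀ S m ∘ₗ LinearMap.mulLeft ℝ a))).2 h hx

lemma sMap_MonoP (x : NA) :
    sMap μ₀ S MonoP x = μ₀ (S x) • 1 + μ₀ (S x * (K * θb)) • θ
      + μ₀ (S x * (θ * K)) • θb - μ₀ (S x * ρ) • ρ := by
  rw [MonoP, Algebra.TensorProduct.one_def, sMap_sub, sMap_add, sMap_add,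
    sMap_tmul, sMap_tmul, sMap_tmul, sMap_tmul, mul_one]

lemma sMap_MonoM (x : NA) :
    sMap μ₀ S MonoM x = μ₀ (S x) • 1 - μ₀ (S x * (K * θb)) • θ
      - μ₀ (S x * (θ * K)) • θb - μ₀ (S x * ρ) • ρ := by
  rw [MonoM, Algebra.TensorProduct.one_def, sMap_sub, sMap_sub, sMap_sub,
    sMap_tmul, sMap_tmul, sMap_tmul, sMap_tmul, mul_one]

end sMap

lemma antipode_ρ {S : NA →ₗ[ℝ] NA} (hSmul : ∀ x y : NA, S (x * y) = S y * S x)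
    (hSθ : S θ = -(K * θ)) (hSθb : S θb = -(K * θb)) : S ρ = ρ := by
  rw [ρ, hSmul, hSθ, hSθb]
  simp [mul_assoc]

/-- the maps `s^±(x) := Σ_j μ₀(S(x)·m_j^±)·n_j^±` built from the
expansions `ℳ^± = Σ_j m_j^± ⊗ n_j^±` satisfy `s^±(θ) = ∓θ`, `s^±(θ̄) = ∓θ̄`,
`s^±(ρ) = 1`, `s^±(1) = −ρ`, and `s^±(K·x) = 0` for every `x ∈ Λ*E`. -/
theorem stmt11
    (S : NA →ₗ[ℝ] NA) (hS1 : S 1 = 1) (hSmul : ∀ x y : NA, S (x * y) = S y * S x)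
    (hSK : S K = K) (hSθ : S θ = -(K * θ)) (hSθb : S θb = -(K * θb))
    (μ₀ : NA →ₗ[ℝ] ℝ)
    (hμ1 : μ₀ 1 = 0) (hμθ : μ₀ θ = 0) (hμθb : μ₀ θb = 0) (hμρ : μ₀ ρ = 1)
    (hμK : μ₀ K = 0) (hμKθ : μ₀ (K * θ) = 0) (hμKθb : μ₀ (K * θb) = 0)
    (hμKρ : μ₀ (K * ρ) = 0) :
    sMap μ₀ S MonoP θ = -θ ∧ sMap μ₀ S MonoM θ = θ ∧
    sMap μ₀ S MonoP θb = -θb ∧ sMap μ₀ S MonoM θb = θb ∧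
    sMap μ₀ S MonoP ρ = 1 ∧ sMap μ₀ S MonoM ρ = 1 ∧
    sMap μ₀ S MonoP 1 = -ρ ∧ sMap μ₀ S MonoM 1 = -ρ ∧
    (∀ x ∈ ΛE, sMap μ₀ S MonoP (K * x) = 0 ∧ sMap μ₀ S MonoM (K * x) = 0) := by
  have hSρ := antipode_ρ hSmul hSθ hSθb
  refine ⟨?_, ?_, ?_, ?_, ?_, ?_, ?_, ?_, fun x hx =>
    ⟨sMap_mul_left_eq_zero_of_mem_span μ₀ S ?_ hx, sMap_mul_left_eq_zero_of_mem_span μ₀ S ?_ hx⟩⟩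
  all_goals try rintro y (rfl | rfl | rfl | rfl)
  all_goals
    simp [sMap_MonoP, sMap_MonoM, hSmul, hS1, hSK, hSθ, hSθb, hSρ, mul_assoc,
      hμ1, hμθ, hμθb, hμρ, hμK, hμKθ, hμKθb, hμKρ]
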